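/- Let C > 1 and E ∈ Reg(C). Then for every x ∈ E and every r > 0 there exists a set E_{x,r} ⊆ E such that E_{x,r} ∈ Reg(2^{6d} 10^d C, 10r) and B(x,r) ∩ E ⊆ E_{x,r} ⊆ B(x,3r) ∩ E. In particular, diam(E_{x,r}) ≥ C^{−2/d} (r/2). -/
import Mathlib


open Metric MeasureTheory Set ENNReal

noncomputable section

namespace CoronaBP

variable {X : Type*} [MetricSpace X] [MeasurableSpace X]

/-- `E` is `d`-regular (w.r.t. `μ`) with constant `C`, up to scale `R₀`. -/
def IsRegUpTo (μ : Measure X) (d C R₀ : ℝ) (E : Set X) : Prop :=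
  IsClosed E ∧ ∀ x ∈ E, ∀ r : ℝ, 0 < r → r < R₀ →
    ENNReal.ofReal (C⁻¹ * r ^ d) ≤ μ (ball x r ∩ E) ∧
      μ (ball x r ∩ E) ≤ ENNReal.ofReal (C * r ^ d)

/-- `E` is `d`-regular (w.r.t. `μ`) with constant `C`, at all scales. -/
def IsReg (μ : Measure X) (d C : ℝ) (E : Set X) : Prop :=
  IsClosed E ∧ ∀ x ∈ E, ∀ r : ℝ, 0 < r →
    ENNReal.ofReal (C⁻¹ * r ^ d) ≤ μ (ball x r ∩ E) ∧
      μ (ball x r ∩ E) ≤ ENNReal.ofReal (C * r ^ d)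

/-- A dyadic grid (Christ-David cubes) on a set `E ⊆ X`.  A cube of generation `k`
has sidelength `ℓ(Q) = 2^{-k}`. -/
structure DyadicGrid (E : Set X) where
  cubes : ℤ → Set (Set X)
  a₀ : ℝ
  C₁ : ℝ
  a₀_pos : 0 < a₀
  C₁_pos : 0 < C₁
  measurableSet_of_mem : ∀ k : ℤ, ∀ Q ∈ cubes k, MeasurableSet Q
  subset_base : ∀ k : ℤ, ∀ Q ∈ cubes k, Q ⊆ E
  disjoint_gen : ∀ k : ℤ, ∀ Q ∈ cubes k, ∀ Q' ∈ cubes k, Q ≠ Q' → Q ∩ Q' = ∅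
  cover : ∀ k : ℤ, ⋃₀ cubes k = E
  nested : ∀ k m : ℤ, k ≤ m → ∀ Q' ∈ cubes m, ∀ Q ∈ cubes k, Q' ⊆ Q ∨ Q' ∩ Q = ∅
  parent : ∀ k m : ℤ, m < k → ∀ Q ∈ cubes k, ∃! Q', Q' ∈ cubes m ∧ Q ⊆ Q'
  diam_le : ∀ k : ℤ, ∀ Q ∈ cubes k, diam Q ≤ C₁ * (2 : ℝ) ^ (-k)
  center : ℤ → Set X → X
  center_mem : ∀ k : ℤ, ∀ Q ∈ cubes k, center k Q ∈ Q
  ball_center_subset : ∀ k : ℤ, ∀ Q ∈ cubes k,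
    ball (center k Q) (a₀ * (2 : ℝ) ^ (-k)) ∩ E ⊆ Q

/-- A cube of the grid, recorded together with its generation. -/
def DyadicGrid.IsCube {E : Set X} (G : DyadicGrid E) (Q : ℤ × Set X) : Prop :=
  Q.2 ∈ G.cubes Q.1

/-- `ℓ(Q) = 2^{-k}` for a cube of generation `k`. -/
def len (Q : ℤ × Set X) : ℝ := (2 : ℝ) ^ (-Q.1)

/-- `KQ = {x ∈ E : dist(x,Q) ≤ (K-1) diam Q}`; `dilate E 2 Q` is `2Q`. -/
def dilate (E : Set X) (K : ℝ) (Q : Set X) : Set X :=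
  {x ∈ E | infDist x Q ≤ (K - 1) * diam Q}

/-- The `β_q` number of a cube `Q` of `E`, relative to the family `𝒜`. -/
def betaq (μ : Measure X) (𝒜 : Set (Set X)) (E : Set X) (q : ℝ) (Q : Set X) : ℝ≥0∞ :=
  ⨅ A ∈ 𝒜,
    ((μ Q)⁻¹ * ∫⁻ y in dilate E 2 Q,
        ENNReal.ofReal ((infDist y A / diam Q) ^ q) ∂μ) ^ (1 / q)

/-- The `β_∞` number of a cube `Q` of `E`, relative to the family `𝒜`. -/
def betainf (𝒜 : Set (Set X)) (E : Set X) (Q : Set X) : ℝ≥0∞ :=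
  ⨅ A ∈ 𝒜,
    (ENNReal.ofReal (diam Q))⁻¹ * ⨆ y ∈ dilate E 2 Q, ENNReal.ofReal (infDist y A)

/-- The `β_q` number for `q ∈ (0,∞]`. -/
def beta (μ : Measure X) (𝒜 : Set (Set X)) (E : Set X) (q : ℝ≥0∞) (Q : Set X) : ℝ≥0∞ :=
  if q = ⊤ then betainf 𝒜 E Q else betaq μ 𝒜 E q.toReal Q

/-- The bilateral `β` number of a cube `Q` of `E` with center `xQ`. -/
def bbeta (𝒜 : Set (Set X)) (E : Set X) (xQ : X) (Q : Set X) : ℝ≥0∞ :=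
  (ENNReal.ofReal (diam Q))⁻¹ *
    ⨅ A ∈ 𝒜,
      ((⨆ y ∈ dilate E 2 Q, ENNReal.ofReal (infDist y A)) +
        ⨆ z ∈ A ∩ ball xQ (2 * diam Q), ENNReal.ofReal (infDist z E))

/-- The `(p,q)`-geometric lemma with respect to `𝒜`, with Carleson measure constant `M`. -/
def GLem (μ : Measure X) {E : Set X} (G : DyadicGrid E) (𝒜 : Set (Set X))
    (p : ℝ) (q : ℝ≥0∞) (M : ℝ) : Prop :=
  ∀ R : ℤ × Set X, G.IsCube R →
    ∑' Q : {Q : ℤ × Set X // G.IsCube Q ∧ Q.2 ⊆ R.2},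
        beta μ 𝒜 E q (Q : ℤ × Set X).2 ^ p * μ (Q : ℤ × Set X).2 ≤
      ENNReal.ofReal M * μ R.2

/-- The weak geometric lemma with parameter `ε` w.r.t. `𝒜`, with Carleson set constant `M`. -/
def WGLem (μ : Measure X) {E : Set X} (G : DyadicGrid E) (𝒜 : Set (Set X))
    (ε M : ℝ) : Prop :=
  ∀ R : ℤ × Set X, G.IsCube R →
    ∑' Q : {Q : ℤ × Set X // G.IsCube Q ∧ Q.2 ⊆ R.2 ∧
        ENNReal.ofReal ε < betainf 𝒜 E Q.2},
      μ (Q : ℤ × Set X).2 ≤ ENNReal.ofReal M * μ R.2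

/-- The bilateral weak geometric lemma with parameter `ε` w.r.t. `𝒜`, with
Carleson set constant `M`. -/
def BWGLem (μ : Measure X) {E : Set X} (G : DyadicGrid E) (𝒜 : Set (Set X))
    (ε M : ℝ) : Prop :=
  ∀ R : ℤ × Set X, G.IsCube R →
    ∑' Q : {Q : ℤ × Set X // G.IsCube Q ∧ Q.2 ⊆ R.2 ∧
        ENNReal.ofReal ε < bbeta 𝒜 E (G.center Q.1 Q.2) Q.2},
      μ (Q : ℤ × Set X).2 ≤ ENNReal.ofReal M * μ R.2

/-- `E` has big pieces of the family `𝓔`, with constant `θ`. -/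
def BigPieces (μ : Measure X) (d θ : ℝ) (𝓔 : Set (Set X)) (E : Set X) : Prop :=
  ∀ x ∈ E, ∀ r : ℝ, 0 < r →
    ∃ Γ ∈ 𝓔, ENNReal.ofReal (θ * r ^ d) ≤ μ (Γ ∩ E ∩ ball x r)

/-- An `(η,K)`-coronization of `E` with respect to the family `𝓔`, with
Carleson packing constant `Cpack`. -/
structure Coronization (μ : Measure X) (E : Set X) (G : DyadicGrid E)
    (𝓔 : Set (Set X)) (η K Cpack : ℝ) where
  bad : Set (ℤ × Set X)
  regimes : Set (Set (ℤ × Set X))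
  top : Set (ℤ × Set X) → ℤ × Set X
  approx : Set (ℤ × Set X) → Set X
  bad_isCube : ∀ Q ∈ bad, G.IsCube Q
  regime_isCube : ∀ S ∈ regimes, ∀ Q ∈ S, G.IsCube Q
  good_not_bad : ∀ S ∈ regimes, ∀ Q ∈ S, Q ∉ bad
  regimes_disjoint : ∀ S ∈ regimes, ∀ S' ∈ regimes, S ≠ S' → S ∩ S' = ∅
  covered : ∀ Q : ℤ × Set X, G.IsCube Q → Q ∉ bad → ∃ S ∈ regimes, Q ∈ S
  top_mem : ∀ S ∈ regimes, top S ∈ S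
  le_top : ∀ S ∈ regimes, ∀ Q ∈ S, Q.2 ⊆ (top S).2
  top_unique : ∀ S ∈ regimes, ∀ Q ∈ S, (∀ Q' ∈ S, Q'.2 ⊆ Q.2) → Q = top S
  coherent : ∀ S ∈ regimes, ∀ Q ∈ S, ∀ Q' : ℤ × Set X, G.IsCube Q' →
    Q.2 ⊆ Q'.2 → Q'.2 ⊆ (top S).2 → Q' ∈ S
  children_all_or_none : ∀ S ∈ regimes, ∀ Q ∈ S,
    (∀ Q' : ℤ × Set X, G.IsCube Q' → Q'.1 = Q.1 + 1 → Q'.2 ⊆ Q.2 → Q' ∈ S) ∨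
      (∀ Q' : ℤ × Set X, G.IsCube Q' → Q'.1 = Q.1 + 1 → Q'.2 ⊆ Q.2 → Q' ∉ S)
  packing : ∀ R : ℤ × Set X, G.IsCube R →
    (∑' Q : {Q : ℤ × Set X // Q ∈ bad ∧ Q.2 ⊆ R.2}, μ (Q : ℤ × Set X).2) +
        (∑' S : {S : Set (ℤ × Set X) // S ∈ regimes ∧ (top S).2 ⊆ R.2},
          μ (top (S : Set (ℤ × Set X))).2) ≤
      ENNReal.ofReal Cpack * μ R.2
  approx_mem : ∀ S ∈ regimes, approx S ∈ 𝓔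
  approx_close : ∀ S ∈ regimes, ∀ Q ∈ S, ∀ x ∈ dilate E K Q.2,
    infDist x (approx S) < η * len Q

/-- The mass `𝔪(𝔻') = Σ_{Q ∈ 𝔻'} α_Q` of a discrete measure. -/
def discMass (α : ℤ × Set X → ℝ≥0∞) (D : Set (ℤ × Set X)) : ℝ≥0∞ :=
  ∑' Q : D, α Q

/-- `𝔻_R`: all cubes of the grid contained in `R`. -/
def cubesIn {E : Set X} (G : DyadicGrid E) (R : ℤ × Set X) : Set (ℤ × Set X) :=
  {Q | G.IsCube Q ∧ Q.2 ⊆ R.2}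

/-- `𝔻_ℱ`: all cubes of the grid not contained in any member of `ℱ`. -/
def sawtooth {E : Set X} (G : DyadicGrid E) (F : Set (ℤ × Set X)) : Set (ℤ × Set X) :=
  {Q | G.IsCube Q ∧ ∀ Q' ∈ F, ¬Q.2 ⊆ Q'.2}

/-- The localized Carleson norm `‖𝔪_ℱ‖_{𝒞(R)}`. -/
def carlesonNorm (μ : Measure X) {E : Set X} (G : DyadicGrid E)
    (α : ℤ × Set X → ℝ≥0∞) (F : Set (ℤ × Set X)) (R : ℤ × Set X) : ℝ≥0∞ :=
  ⨆ Q ∈ cubesIn G R, discMass α (cubesIn G Q ∩ sawtooth G F) / μ Q.2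

/-- A family of cubes which are pairwise disjoint (as sets). -/
def PairwiseDisjointCubes (F : Set (ℤ × Set X)) : Prop :=
  ∀ Q ∈ F, ∀ Q' ∈ F, Q ≠ Q' → Q.2 ∩ Q'.2 = ∅

open Classical in
/-- The coefficients `α_Q = μ(Q)` if `Q` is a bad cube or a maximal cube, `0` otherwise. -/
def coronaCoeff (μ : Measure X) {E : Set X} {G : DyadicGrid E} {𝓔 : Set (Set X)}
    {η K Cpack : ℝ} (c : Coronization μ E G 𝓔 η K Cpack) : ℤ × Set X → ℝ≥0∞ :=
  fun Q => if Q ∈ c.bad ∨ ∃ S ∈ c.regimes, Q = c.top S then μ Q.2 else 0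

/-- `loc S Q` is a localized approximating set `Γ_S(Q)` for each regime `S` and `Q ∈ S`. -/
def IsLocApprox {μ : Measure X} {E : Set X} {G : DyadicGrid E} {𝓔 : Set (Set X)}
    {η K Cpack : ℝ} (c : Coronization μ E G 𝓔 η K Cpack)
    (loc : Set (ℤ × Set X) → ℤ × Set X → Set X) : Prop :=
  ∀ S ∈ c.regimes, ∀ Q ∈ S,
    IsClosed (loc S Q) ∧ loc S Q ⊆ c.approx S ∧
      ∀ Q' ∈ S, Q'.2 ⊆ Q.2 →
        ∀ x ∈ dilate E K Q'.2, infDist x (loc S Q) < η * len Q'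


/-- Auxiliary: iterative thickening of `E ∩ closedBall x r` inside `E`. -/
private def locA (E : Set X) (x : X) (r : ℝ) : ℕ → Set X
  | 0 => E ∩ closedBall x r
  | (k+1) => {w ∈ E | ∃ y ∈ locA E x r k, dist w y ≤ r / 2 ^ (k + 2)}

private lemma locA_subset (E : Set X) (x : X) (r : ℝ) : ∀ k, locA E x r k ⊆ E
  | 0 => Set.inter_subset_left
  | (k+1) => fun _ hw => hw.1

private lemma mem_locA_succ {E : Set X} {x : X} {r : ℝ} {k : ℕ} {w : X} :
    w ∈ locA E x r (k+1) ↔ w ∈ E ∧ ∃ y ∈ locA E x r k, dist w y ≤ r / 2 ^ (k + 2) :=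
  Iff.rfl

private lemma locA_succ (E : Set X) (x : X) {r : ℝ} (hr : 0 < r) (k : ℕ) :
    locA E x r k ⊆ locA E x r (k+1) := by
  intro w hw
  exact mem_locA_succ.mpr ⟨locA_subset E x r k hw, w, hw, by simp [dist_self]; positivity⟩

private lemma locA_mono (E : Set X) (x : X) {r : ℝ} (hr : 0 < r) {k l : ℕ} (hkl : k ≤ l) :
    locA E x r k ⊆ locA E x r l := by
  induction l, hkl using Nat.le_induction with
  | base => exact le_refl _
  | succ n hn ih => exact ih.trans (locA_succ E x hr n)

private lemma locA_ancestor (E : Set X) (x : X) {r : ℝ} (hr : 0 < r) :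
    ∀ k, ∀ z ∈ locA E x r k, ∀ j, j ≤ k →
      ∃ y ∈ locA E x r j, dist z y ≤ r / 2 ^ (j+1) - r / 2 ^ (k+1) := by
  intro k
  induction k with
  | zero =>
    intro z hz j hj
    obtain rfl : j = 0 := Nat.le_zero.mp hj
    exact ⟨z, hz, by simp⟩
  | succ n ih =>
    intro z hz j hj
    rcases eq_or_lt_of_le hj with rfl | hj'
    · exact ⟨z, hz, by simp⟩
    · have hjn : j ≤ n := Nat.lt_succ_iff.mp hj'
      obtain ⟨y', hy', hd'⟩ := (mem_locA_succ.mp hz).2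
      obtain ⟨y, hy, hd⟩ := ih y' hy' j hjn
      refine ⟨y, hy, ?_⟩
      have h2 : r / 2 ^ (n+1) = 2 * (r / 2 ^ (n+2)) := by
        rw [pow_succ]; ring
      calc dist z y ≤ dist z y' + dist y' y := dist_triangle _ _ _
        _ ≤ r / 2 ^ (n+2) + (r / 2 ^ (j+1) - r / 2 ^ (n+1)) := add_le_add hd' hd
        _ = r / 2 ^ (j+1) - r / 2 ^ (n+2) := by rw [h2]; ring

/-- Lemma 2.2, localization of a regular set: every `d`-regular
set can be localized near `B(x,r)` keeping `d`-regularity up to scale `10r`. -/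
theorem localization_of_regular_set
    (X : Type) [MetricSpace X] [MeasurableSpace X] [BorelSpace X]
    (μ : Measure X) (d C : ℝ) (E : Set X)
    (hX : EMetric.diam (Set.univ : Set X) = ⊤)
    (hd : 0 < d) (hC : 1 < C) (hE : IsReg μ d C E) :
    ∀ x ∈ E, ∀ r : ℝ, 0 < r →
      ∃ F : Set X, F ⊆ E ∧
        IsRegUpTo μ d ((2 : ℝ) ^ (6 * d) * (10 : ℝ) ^ d * C) (10 * r) F ∧
        ball x r ∩ E ⊆ F ∧ F ⊆ ball x (3 * r) ∩ E ∧
        C ^ (-2 / d) * (r / 2) ≤ diam F := by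
  classical
  intro x hx r hr
  obtain ⟨hEclosed, hreg⟩ := hE
  have hCpos : (0 : ℝ) < C := lt_trans one_pos hC
  set F := closure (⋃ k, locA E x r k) with hFdef
  have hAE : ∀ k, locA E x r k ⊆ E := locA_subset E x r
  have hUE : (⋃ k, locA E x r k) ⊆ E := Set.iUnion_subset hAE
  have hFE : F ⊆ E := closure_minimal hUE hEclosed
  have hx0 : x ∈ locA E x r 0 := ⟨hx, Metric.mem_closedBall_self hr.le⟩
  have hxF : x ∈ F := subset_closure (Set.mem_iUnion.mpr ⟨0, hx0⟩)
  have hballr : ball x r ∩ E ⊆ F := by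
    intro w hw
    exact subset_closure (Set.mem_iUnion.mpr ⟨0, ⟨hw.2, Metric.mem_closedBall.mpr
      (le_of_lt (Metric.mem_ball.mp hw.1))⟩⟩)
  -- every point of a locA is within 3r/2 of x
  have hA32 : ∀ k, ∀ z ∈ locA E x r k, dist z x ≤ 3 * r / 2 := by
    intro k z hz
    obtain ⟨y, hy, hd⟩ := locA_ancestor E x hr k z hz 0 (Nat.zero_le k)
    have h1 : dist z y ≤ r / 2 := by
      have hpos : (0:ℝ) ≤ r / 2 ^ (k+1) := by positivity
      have h01 : r / 2 ^ (0+1) = r / 2 := by norm_num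
      linarith [hd]
    have h2 : dist y x ≤ r := Metric.mem_closedBall.mp hy.2
    calc dist z x ≤ dist z y + dist y x := dist_triangle _ _ _
      _ ≤ r / 2 + r := add_le_add h1 h2
      _ = 3 * r / 2 := by ring
  have hF32 : F ⊆ closedBall x (3 * r / 2) :=
    closure_minimal (Set.iUnion_subset fun k z hz => Metric.mem_closedBall.mpr (hA32 k z hz))
      Metric.isClosed_closedBall
  have hF3 : F ⊆ ball x (3 * r) ∩ E := by
    intro q hq
    refine ⟨Metric.mem_ball.mpr ?_, hFE hq⟩
    have := Metric.mem_closedBall.mp (hF32 hq)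
    linarith
  -- key real inequality for constants
  have h640 : (2 : ℝ) ^ (6 * d) * (10 : ℝ) ^ d = (640 : ℝ) ^ d := by
    have h1 : (2 : ℝ) ^ (6 * d) = ((2 : ℝ) ^ (6 : ℝ)) ^ d := by
      rw [← Real.rpow_mul (by norm_num)]
    have h2 : ((2 : ℝ) ^ (6 : ℝ)) = (64 : ℝ) := by
      rw [show (6:ℝ) = ((6:ℕ):ℝ) by norm_num, Real.rpow_natCast]; norm_num
    rw [h1, h2, ← Real.mul_rpow (by norm_num) (by norm_num)]
    norm_num
  have h640pos : (0:ℝ) < (640:ℝ) ^ d := Real.rpow_pos_of_pos (by norm_num) d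
  have h40le : (40 : ℝ) ^ d ≤ (640 : ℝ) ^ d :=
    Real.rpow_le_rpow (by norm_num) (by norm_num) hd.le
  have h40pos : (0:ℝ) < (40:ℝ) ^ d := Real.rpow_pos_of_pos (by norm_num) d
  have hone640 : (1:ℝ) ≤ (640:ℝ) ^ d := by
    calc (1:ℝ) = (1:ℝ) ^ d := (Real.one_rpow d).symm
      _ ≤ (640:ℝ) ^ d := Real.rpow_le_rpow (by norm_num) (by norm_num) hd.le
  refine ⟨F, hFE, ⟨isClosed_closure, ?_⟩, hballr, hF3, ?_⟩
  · -- regularity of F up to scale 10 r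
    intro z hzF s hs hs10
    constructor
    · -- lower bound
      obtain ⟨z', hz'U, hzz'⟩ := Metric.mem_closure_iff.mp hzF (s/2) (by positivity)
      obtain ⟨m, hm⟩ := Set.mem_iUnion.mp hz'U
      have hexP : ∃ n : ℕ, 3 * r / 2 ^ (n+2) ≤ s / 2 := by
        obtain ⟨n, hn⟩ := pow_unbounded_of_one_lt (y := (2:ℝ)) ((3*r)/(s/2)) one_lt_two
        refine ⟨n, ?_⟩
        have hs2 : (0:ℝ) < s / 2 := by positivity
        have h1 : 3 * r < (s/2) * 2 ^ n := by
          have := (div_lt_iff₀ hs2).mp hn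
          linarith
        have h2 : (2:ℝ) ^ n ≤ 2 ^ (n+2) := by
          apply pow_le_pow_right₀ (by norm_num) (by omega)
        have h3 : 3 * r / 2 ^ (n+2) ≤ 3 * r / 2 ^ n :=
          div_le_div_of_nonneg_left (by positivity) (by positivity) h2
        have h4 : 3 * r / 2 ^ n < s / 2 := by
          rw [div_lt_iff₀ (by positivity)]
          linarith
        linarith
      set j := Nat.find hexP with hjdef
      have hPj : 3 * r / 2 ^ (j+2) ≤ s / 2 := Nat.find_spec hexP
      have hz'k : z' ∈ locA E x r (max m j) := locA_mono E x hr (le_max_left m j) hm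
      obtain ⟨y, hyj, hdy⟩ := locA_ancestor E x hr (max m j) z' hz'k j (le_max_right m j)
      have hdy' : dist z' y ≤ r / 2 ^ (j+1) :=
        hdy.trans (sub_le_self _ (by positivity))
      set t := r / 2 ^ (j+2) with htdef
      have ht0 : 0 < t := by positivity
      have h2t : r / 2 ^ (j+1) = 2 * t := by
        rw [htdef, pow_succ]; ring
      have hty : ball y t ∩ E ⊆ locA E x r (j+1) := by
        intro w hw
        exact mem_locA_succ.mpr ⟨hw.2, y, hyj, le_of_lt (Metric.mem_ball.mp hw.1)⟩
      have hsub : ball y t ∩ E ⊆ ball z s ∩ F := by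
        intro w hw
        refine ⟨Metric.mem_ball.mpr ?_, subset_closure (Set.mem_iUnion.mpr ⟨j+1, hty hw⟩)⟩
        have hw1 : dist w y < t := Metric.mem_ball.mp hw.1
        have : 3 * r / 2 ^ (j+2) = t + r / 2 ^ (j+1) := by
          rw [h2t, htdef]; ring
        calc dist w z ≤ dist w y + dist y z' + dist z' z := dist_triangle4 w y z' z
          _ < t + r / 2 ^ (j+1) + s/2 := by
              rw [dist_comm y z', dist_comm z' z]
              exact add_lt_add_of_lt_of_le (add_lt_add_of_lt_of_le hw1 hdy')
                (le_of_lt hzz')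
          _ ≤ s/2 + s/2 := by linarith
          _ = s := by ring
      have hyE : y ∈ E := hAE j hyj
      have hlow := (hreg y hyE t ht0).1
      -- size of t
      have hts : s / 40 ≤ t := by
        rcases Nat.eq_zero_or_pos j with hj0 | hjpos
        · rw [htdef, hj0]
          norm_num
          linarith
        · have hj1 : j - 1 < j := Nat.sub_lt hjpos one_pos
          have hnot := Nat.find_min hexP hj1
          have hidx : (j - 1) + 2 = j + 1 := by omega
          rw [hidx] at hnot
          push_neg at hnot
          have h6 : 3 * r / 2 ^ (j+1) = 6 * t := by
            rw [htdef, pow_succ]; ring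
          rw [h6] at hnot
          linarith
      calc ENNReal.ofReal (((2:ℝ) ^ (6*d) * 10 ^ d * C)⁻¹ * s ^ d)
          ≤ ENNReal.ofReal (C⁻¹ * t ^ d) := by
            apply ENNReal.ofReal_le_ofReal
            rw [h640]
            have hst : (s/40) ^ d ≤ t ^ d := Real.rpow_le_rpow (by positivity) hts hd.le
            have hsd : (s/40) ^ d = s ^ d / 40 ^ d := Real.div_rpow hs.le (by norm_num : (0:ℝ) ≤ 40) d
            have hmain : ((640:ℝ) ^ d * C)⁻¹ * s ^ d ≤ C⁻¹ * (s/40) ^ d := by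
              rw [hsd]
              rw [mul_inv]
              have : C⁻¹ * (s ^ d / 40 ^ d) = ((40:ℝ)^d)⁻¹ * C⁻¹ * s ^ d := by ring
              rw [this]
              apply mul_le_mul_of_nonneg_right _ (Real.rpow_nonneg hs.le d)
              apply mul_le_mul_of_nonneg_right _ (by positivity)
              exact inv_anti₀ h40pos h40le
            exact hmain.trans (mul_le_mul_of_nonneg_left hst (by positivity))
        _ ≤ μ (ball y t ∩ E) := hlow
        _ ≤ μ (ball z s ∩ F) := measure_mono hsub
    · -- upper bound
      have h1 : μ (ball z s ∩ F) ≤ μ (ball z s ∩ E) :=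
        measure_mono (Set.inter_subset_inter_right _ hFE)
      have h2 := (hreg z (hFE hzF) s hs).2
      refine (h1.trans h2).trans (ENNReal.ofReal_le_ofReal ?_)
      rw [h640]
      have : C * s ^ d = 1 * (C * s ^ d) := by ring
      rw [this, show (640:ℝ) ^ d * C * s ^ d = (640:ℝ)^d * (C * s ^ d) by ring]
      exact mul_le_mul_of_nonneg_right hone640 (by positivity)
  · -- diameter lower bound
    by_contra hcon
    push_neg at hcon
    set δ := diam F with hδdef
    set t := C ^ (-2/d) * (r / 2) with htdef
    have hCrpos : (0:ℝ) < C ^ (-2/d) := Real.rpow_pos_of_pos hCpos _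
    have ht0 : 0 < t := by positivity
    have hFb : Bornology.IsBounded F := Metric.isBounded_closedBall.subset hF32
    have hFt : F ⊆ ball x t := by
      intro q hq
      have := Metric.dist_le_diam_of_mem hFb hq hxF
      exact Metric.mem_ball.mpr (lt_of_le_of_lt this hcon)
    have h1 : ENNReal.ofReal (C⁻¹ * r ^ d) ≤ μ (ball x r ∩ E) := (hreg x hx r hr).1
    have h2 : μ (ball x r ∩ E) ≤ μ (ball x t ∩ E) :=
      measure_mono fun w hw => ⟨hFt (hballr hw), hw.2⟩
    have h3 := (hreg x hx t ht0).2
    have hreal : C⁻¹ * r ^ d ≤ C * t ^ d :=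
      (ENNReal.ofReal_le_ofReal_iff (by positivity)).mp ((h1.trans h2).trans h3)
    have htd : t ^ d = C ^ (-2:ℝ) * (r/2) ^ d := by
      rw [htdef, Real.mul_rpow hCrpos.le (by positivity), ← Real.rpow_mul hCpos.le]
      congr 2
      field_simp
    have hCC : C * C ^ (-2:ℝ) = C⁻¹ := by
      rw [show C * C ^ (-2:ℝ) = C ^ (1:ℝ) * C ^ (-2:ℝ) by rw [Real.rpow_one],
        ← Real.rpow_add hCpos]
      norm_num
      exact Real.rpow_neg_one C
    rw [htd, ← mul_assoc, hCC] at hreal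
    have hrd : r ^ d ≤ (r/2) ^ d :=
      le_of_mul_le_mul_left (by linarith [hreal]) (inv_pos.mpr hCpos)
    have : (r/2) ^ d < r ^ d :=
      Real.rpow_lt_rpow (by positivity) (by linarith) hd
    linarith

end CoronaBP
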